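/- arXiv:2004.05468 — 5 statements merged into one kernel-verified Lean document; each statement's English description precedes it below -/
import Mathlib

section
/- Let A be a local ring with residue field k = A/m_A, let pr : A → k be the projection, and let O ⊆ k be a subring which is a local ring. Set A⁺ = pr⁻¹(O) ⊆ A. Then A⁺ is a local ring (its maximal ideal is the preimage of the maximal ideal of O), and A⁺ is a henselian local ring if and only if both A and O are henselian local rings. -/
open Polynomial IsLocalRing

section Aux
variable {A : Type*} [CommRing A] [IsLocalRing A]
    (O : Subring (IsLocalRing.ResidueField A)) [IsLocalRing O]

/-- The projection `A⁺ → O`. -/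
noncomputable def auxPi : (O.comap (residue A)) →+* O :=
  ((residue A).comp (O.comap (residue A)).subtype).codRestrict O (fun x => x.2)

omit [IsLocalRing O] in
@[simp] lemma auxPi_apply (x : O.comap (residue A)) :
    auxPi O x = ⟨residue A x.1, x.2⟩ := rfl

omit [IsLocalRing O] in
lemma auxPi_surjective : Function.Surjective (auxPi O) := by
  rintro ⟨y, hy⟩
  obtain ⟨a, ha⟩ := Ideal.Quotient.mk_surjective (I := maximalIdeal A) y
  have ha' : residue A a = y := ha
  exact ⟨⟨a, by simp [Subring.mem_comap, ha', hy]⟩, by simp [ha']⟩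

omit [IsLocalRing O] in
lemma aux_mem_of_mem_max {x : A} (hx : x ∈ maximalIdeal A) : x ∈ O.comap (residue A) := by
  have : residue A x = 0 := Ideal.Quotient.eq_zero_iff_mem.2 hx
  simp [Subring.mem_comap, this]

omit [IsLocalRing O] in
lemma aux_isUnit_iff (x : O.comap (residue A)) : IsUnit x ↔ IsUnit (auxPi O x) := by
  constructor
  · exact fun h => h.map (auxPi O)
  · rintro ⟨u, hu⟩
    have h1 : ((u : O) : ResidueField A) * ((u⁻¹ : Oˣ) : O) = 1 := by
      exact_mod_cast congrArg (fun z : O => (z : ResidueField A)) u.mul_inv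
    rw [hu] at h1
    have h1 : residue A x.1 * ((u⁻¹ : Oˣ) : O).1 = 1 := h1
    have hxu : IsUnit x.1 := by
      by_contra hnx
      have hx : x.1 ∈ maximalIdeal A := (mem_maximalIdeal _).2 hnx
      rw [show residue A x.1 = 0 from Ideal.Quotient.eq_zero_iff_mem.2 hx, zero_mul] at h1
      exact zero_ne_one h1
    obtain ⟨v, hv⟩ := hxu
    obtain ⟨y, hy⟩ : ∃ y : A, x.1 * y = 1 := ⟨(v⁻¹ : Aˣ), by simp [← hv, ← Units.val_mul]⟩
    have h2 : residue A x.1 * residue A y = 1 := by rw [← map_mul, hy, map_one]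
    have hry : residue A y = ((u⁻¹ : Oˣ) : O).1 := by
      calc residue A y = (residue A x.1 * ((u⁻¹ : Oˣ) : O).1) * residue A y := by rw [h1, one_mul]
        _ = ((u⁻¹ : Oˣ) : O).1 * (residue A x.1 * residue A y) := by ring
        _ = ((u⁻¹ : Oˣ) : O).1 := by rw [h2, mul_one]
    have hyB : y ∈ O.comap (residue A) := by
      simp [Subring.mem_comap, hry]
    exact isUnit_iff_exists_inv.2 ⟨⟨y, hyB⟩, Subtype.ext (by simpa using hy)⟩

lemma aux_nonunit_iff (x : O.comap (residue A)) :
    ¬ IsUnit x ↔ auxPi O x ∈ maximalIdeal O := by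
  rw [aux_isUnit_iff, mem_maximalIdeal, mem_nonunits_iff]

lemma aux_isLocalRing : IsLocalRing (O.comap (residue A)) := by
  have : Nontrivial (O.comap (residue A)) := ⟨⟨0, 1, by
    intro h; exact zero_ne_one (congrArg Subtype.val h)⟩⟩
  refine IsLocalRing.of_nonunits_add ?_
  intro a b ha hb
  rw [mem_nonunits_iff, aux_nonunit_iff] at ha hb ⊢
  rw [map_add]; exact Ideal.add_mem _ ha hb

end Aux

section Aux2
variable {A : Type*} [CommRing A] [IsLocalRing A]
    (O : Subring (IsLocalRing.ResidueField A)) [IsLocalRing O]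

omit [IsLocalRing O] in
lemma aux_evalmap {R S : Type*} [CommRing R] [CommRing S] (f : R →+* S) (p : R[X]) (x : R) :
    (p.map f).eval (f x) = f (p.eval x) := by
  simp [Polynomial.eval_map, Polynomial.eval₂_at_apply]

lemma aux_mem_max_iff [IsLocalRing (O.comap (residue A))] (x : O.comap (residue A)) :
    x ∈ maximalIdeal (O.comap (residue A)) ↔ auxPi O x ∈ maximalIdeal O := by
  rw [mem_maximalIdeal, mem_nonunits_iff, aux_nonunit_iff]

lemma aux_mem_max_of [IsLocalRing (O.comap (residue A))] {x : O.comap (residue A)}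
    (h : x.1 ∈ maximalIdeal A) : x ∈ maximalIdeal (O.comap (residue A)) := by
  rw [aux_mem_max_iff]
  have h0 : residue A x.1 = 0 := Ideal.Quotient.eq_zero_iff_mem.2 h
  have : auxPi O x = 0 := Subtype.ext (by simp [h0])
  rw [this]
  exact Ideal.zero_mem _

/-- `A⁺` henselian implies `O` henselian. -/
lemma aux_hens_O [HenselianLocalRing (O.comap (residue A))] : HenselianLocalRing O := by
  constructor
  intro f hf a₀ h₁ h₂
  obtain ⟨F0, hF0⟩ := Polynomial.map_surjective _ (auxPi_surjective O) f
  obtain ⟨F, hFmap, _, hFmonic⟩ := Polynomial.lifts_and_natDegree_eq_and_monic ⟨F0, hF0⟩ hf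
  obtain ⟨b₀, hb₀⟩ := auxPi_surjective O a₀
  have h₁' : F.eval b₀ ∈ maximalIdeal (O.comap (residue A)) := by
    rw [aux_mem_max_iff, show auxPi O (F.eval b₀) = f.eval a₀ from by
      rw [← aux_evalmap, hFmap, hb₀]]
    exact h₁
  have h₂' : IsUnit (F.derivative.eval b₀) := by
    rw [aux_isUnit_iff, show auxPi O (F.derivative.eval b₀) = f.derivative.eval a₀ from by
      rw [← aux_evalmap, ← Polynomial.derivative_map, hFmap, hb₀]]
    exact h₂
  obtain ⟨b, hb, hbb₀⟩ := HenselianLocalRing.is_henselian F hFmonic b₀ h₁' h₂'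
  refine ⟨auxPi O b, ?_, ?_⟩
  · have : f.eval (auxPi O b) = 0 := by
      rw [← hFmap, aux_evalmap, hb.eq_zero, map_zero]
    exact this
  · have := (aux_mem_max_iff O _).1 hbb₀
    rw [map_sub, hb₀] at this
    exact this

end Aux2

section Aux3
variable {A : Type*} [CommRing A] [IsLocalRing A]
    (O : Subring (IsLocalRing.ResidueField A)) [IsLocalRing O]

/-- `A` and `O` henselian imply `A⁺` henselian. -/
lemma aux_hens_B [HenselianLocalRing A] [HenselianLocalRing O] :
    HenselianLocalRing (O.comap (residue A)) := by
  haveI hloc := aux_isLocalRing O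
  constructor
  intro F hF b₀ h₁ h₂
  -- push the data down to O
  have h₁O : (F.map (auxPi O)).eval (auxPi O b₀) ∈ maximalIdeal O := by
    rw [aux_evalmap]; exact (aux_mem_max_iff O _).1 h₁
  have h₂O : IsUnit ((F.map (auxPi O)).derivative.eval (auxPi O b₀)) := by
    rw [Polynomial.derivative_map, aux_evalmap]
    exact (aux_isUnit_iff O _).1 h₂
  obtain ⟨β, hβroot, hβ⟩ := HenselianLocalRing.is_henselian (F.map (auxPi O)) (hF.map _)
    (auxPi O b₀) h₁O h₂O
  -- lift β to A
  obtain ⟨a₁, ha₁⟩ := Ideal.Quotient.mk_surjective (I := maximalIdeal A) (β : ResidueField A)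
  have ha₁' : residue A a₁ = (β : ResidueField A) := ha₁
  -- key compatibility
  have hres : ∀ q : (O.comap (residue A) : Subring A)[X],
      residue A ((q.map (O.comap (residue A)).subtype).eval a₁)
      = (((q.map (auxPi O)).eval β : O) : ResidueField A) := by
    intro q
    have e1 : ((q.map (O.comap (residue A)).subtype).map (residue A)).eval (residue A a₁)
        = residue A ((q.map (O.comap (residue A)).subtype).eval a₁) := aux_evalmap _ _ _
    have e2 : (q.map (O.comap (residue A)).subtype).map (residue A)
        = (q.map (auxPi O)).map O.subtype := by
      rw [Polynomial.map_map, Polynomial.map_map]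
      congr 1
    have e3 : ((q.map (auxPi O)).map O.subtype).eval (O.subtype β)
        = O.subtype ((q.map (auxPi O)).eval β) := aux_evalmap _ _ _
    rw [← e1, e2, ha₁']
    exact e3
  -- the simple-root data over A
  have h₁A : (F.map (O.comap (residue A)).subtype).eval a₁ ∈ maximalIdeal A := by
    rw [← Ideal.Quotient.eq_zero_iff_mem]
    have := hres F
    rw [hβroot.eq_zero, ZeroMemClass.coe_zero] at this
    exact this
  have hderunit : IsUnit ((F.map (auxPi O)).derivative.eval β) := by
    have hd : (F.map (auxPi O)).derivative.eval β
        - (F.map (auxPi O)).derivative.eval (auxPi O b₀) ∈ maximalIdeal O :=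
      (maximalIdeal O).mem_of_dvd (Polynomial.sub_dvd_eval_sub _ _ _) hβ
    by_contra hnu
    have hm : (F.map (auxPi O)).derivative.eval β ∈ maximalIdeal O := (mem_maximalIdeal _).2 hnu
    exact (mem_maximalIdeal _).1 (by simpa using Ideal.sub_mem _ hm hd) h₂O
  have h₂A : IsUnit ((F.map (O.comap (residue A)).subtype).derivative.eval a₁) := by
    by_contra hnu
    have hm : (F.map (O.comap (residue A)).subtype).derivative.eval a₁ ∈ maximalIdeal A :=
      (mem_maximalIdeal _).2 hnu
    have h0 : residue A ((F.map (O.comap (residue A)).subtype).derivative.eval a₁) = 0 :=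
      Ideal.Quotient.eq_zero_iff_mem.2 hm
    rw [Polynomial.derivative_map, hres F.derivative, ← Polynomial.derivative_map] at h0
    obtain ⟨u, hu⟩ := hderunit
    have h00 : ((u : O) : ResidueField A) = 0 := by rw [hu]; exact h0
    have h1 : ((u : O) : ResidueField A) * (((u⁻¹ : Oˣ) : O) : ResidueField A) = 1 := by
      exact_mod_cast congrArg (fun z : O => (z : ResidueField A)) u.mul_inv
    rw [h00, zero_mul] at h1
    exact zero_ne_one h1
  obtain ⟨a, haroot, ha⟩ := HenselianLocalRing.is_henselian
    (F.map (O.comap (residue A)).subtype) (hF.map _) a₁ h₁A h₂A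
  have hresa : residue A a = (β : ResidueField A) := by
    have : residue A (a - a₁) = 0 := Ideal.Quotient.eq_zero_iff_mem.2 ha
    rw [map_sub, sub_eq_zero] at this
    rw [this, ha₁']
  have haB : a ∈ O.comap (residue A) := by simp [Subring.mem_comap, hresa]
  refine ⟨⟨a, haB⟩, ?_, ?_⟩
  · have : (O.comap (residue A)).subtype (F.eval ⟨a, haB⟩) = 0 := by
      rw [← aux_evalmap (O.comap (residue A)).subtype F ⟨a, haB⟩]
      exact haroot.eq_zero
    exact Subtype.ext (by simpa using this)
  · rw [aux_mem_max_iff, map_sub]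
    have hπa : auxPi O ⟨a, haB⟩ = β := Subtype.ext (by simpa using hresa)
    rw [hπa]
    exact hβ

end Aux3

section Aux4
variable {A : Type*} [CommRing A] [IsLocalRing A]
    (O : Subring (IsLocalRing.ResidueField A)) [IsLocalRing O]

set_option maxHeartbeats 1000000 in
/-- `A⁺` henselian implies `A` henselian. -/
lemma aux_hens_A [HenselianLocalRing (O.comap (residue A))] : HenselianLocalRing A := by
  constructor
  intro f hf a₀ h₁ h₂
  -- the degree
  have hn : 1 ≤ f.natDegree := by
    by_contra h
    push_neg at h
    have hf1 : f = 1 := hf.natDegree_eq_zero.1 (by omega)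
    rw [hf1] at h₁
    simp only [Polynomial.eval_one] at h₁
    exact (mem_maximalIdeal _).1 h₁ isUnit_one
  obtain ⟨m, hm⟩ : ∃ m, f.natDegree = m + 1 := ⟨f.natDegree - 1, by omega⟩
  set n := f.natDegree with hndef
  -- the shifted polynomial
  set g := Polynomial.taylor a₀ f with hg
  have ht : g.coeff 0 ∈ maximalIdeal A := by
    rw [hg, Polynomial.taylor_coeff_zero]; exact h₁
  have hu : IsUnit (g.coeff 1) := by
    rw [hg, Polynomial.taylor_coeff_one]; exact h₂
  obtain ⟨U, hU⟩ := hu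
  set t : A := g.coeff 0 with htdef
  set v : A := ((U⁻¹ : Aˣ) : A) with hvdef
  have huv : g.coeff 1 * v = 1 := by
    rw [← hU, hvdef]; exact_mod_cast U.mul_inv
  -- the coefficients of the auxiliary polynomial
  set c : ℕ → A := fun i =>
    if i = 0 then 1 else if i = 1 then 1 else g.coeff i * t ^ (i - 1) * v ^ i with hc
  have hc0 : c 0 = 1 := rfl
  have hc1 : c 1 = 1 := rfl
  have hc2 : ∀ j : ℕ, c (j + 2) = g.coeff (j + 2) * t ^ (j + 1) * v ^ (j + 2) := fun j => rfl
  have hcm : ∀ j : ℕ, c (j + 2) ∈ maximalIdeal A := by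
    intro j
    rw [hc2]
    exact Ideal.mul_mem_right _ _
      (Ideal.mul_mem_left _ _ ((maximalIdeal A).pow_mem_of_mem ht _ (Nat.succ_pos j)))
  have hcB : ∀ i, c i ∈ O.comap (residue A) := by
    intro i
    match i with
    | 0 => rw [hc0]; exact one_mem _
    | 1 => rw [hc1]; exact one_mem _
    | (j+2) => exact aux_mem_of_mem_max O (hcm j)
  -- the auxiliary (reversed) polynomial over A⁺
  set P : (O.comap (residue A) : Subring A)[X] :=
    ∑ i ∈ Finset.range (n + 1),
      Polynomial.C (⟨c i, hcB i⟩ : (O.comap (residue A) : Subring A)) * Polynomial.X ^ (n - i)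
    with hP
  have hPle : P.natDegree ≤ n := by
    rw [hP]
    exact Polynomial.natDegree_sum_le_of_forall_le _ _ (fun i _ =>
      (Polynomial.natDegree_C_mul_X_pow_le _ _).trans (Nat.sub_le _ _))
  have hPcoeff : P.coeff n = 1 := by
    rw [hP, Polynomial.finset_sum_coeff]
    rw [Finset.sum_eq_single_of_mem 0 (Finset.mem_range.2 (by omega))]
    · rw [Polynomial.coeff_C_mul_X_pow, if_pos (by omega)]
      exact Subtype.ext hc0
    · intro i hi hi0
      rw [Polynomial.coeff_C_mul_X_pow]
      rw [if_neg (by rw [Finset.mem_range] at hi; omega)]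
  have hPmonic : P.Monic := Polynomial.monic_of_natDegree_le_of_coeff_eq_one n hPle hPcoeff
  -- evaluation formula
  have hval : ∀ w : (O.comap (residue A) : Subring A),
      ((P.eval w : (O.comap (residue A) : Subring A)) : A)
        = ∑ i ∈ Finset.range (n + 1), c i * (w : A) ^ (n - i) := by
    intro w
    rw [hP, Polynomial.eval_finset_sum]
    push_cast
    simp
  have hdval :
      ((P.derivative.eval (-1) : (O.comap (residue A) : Subring A)) : A)
        = ∑ i ∈ Finset.range (n + 1), c i * (n - i : ℕ) * (-1 : A) ^ (n - i - 1) := by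
    rw [hP, Polynomial.derivative_sum]
    simp only [Polynomial.derivative_C_mul_X_pow]
    rw [Polynomial.eval_finset_sum]
    push_cast
    refine Finset.sum_congr rfl fun i _ => ?_
    rw [Polynomial.eval_mul, Polynomial.eval_C, Polynomial.eval_pow, Polynomial.eval_X]
    push_cast
    ring
  -- the simple root data
  have h₁' : P.eval (-1) ∈ maximalIdeal (O.comap (residue A) : Subring A) := by
    apply aux_mem_max_of
    rw [hval]
    have hcoe : ((-1 : (O.comap (residue A) : Subring A)) : A) = -1 := by push_cast; ring
    rw [hcoe, hm, Finset.sum_range_succ', Finset.sum_range_succ']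
    have e0 : c 0 * (-1 : A) ^ (m + 1 - 0) = (-1) ^ (m + 1) := by
      rw [hc0, one_mul, Nat.sub_zero]
    have e1 : c (0 + 1) * (-1 : A) ^ (m + 1 - (0 + 1)) = (-1) ^ m := by
      rw [show (0 + 1 : ℕ) = 1 from rfl, hc1]
      norm_num
    rw [e0, e1, add_assoc]
    have hz : ((-1 : A) ^ m + (-1) ^ (m + 1)) = 0 := by ring
    rw [hz, add_zero]
    exact Ideal.sum_mem _ (fun i _ =>
      Ideal.mul_mem_right _ _ (hcm i))
  have h₂' : IsUnit (P.derivative.eval (-1)) := by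
    rw [aux_isUnit_iff]
    have hs : ((P.derivative.eval (-1) : (O.comap (residue A) : Subring A)) : A) - (-1) ^ m
        ∈ maximalIdeal A := by
      rw [hdval, hm, Finset.sum_range_succ', Finset.sum_range_succ']
      have e0 : c 0 * ((m + 1 - 0 : ℕ) : A) * (-1 : A) ^ (m + 1 - 0 - 1)
          = ((m + 1 : ℕ) : A) * (-1) ^ m := by rw [hc0]; norm_num
      have e1 : c (0 + 1) * ((m + 1 - (0 + 1) : ℕ) : A) * (-1 : A) ^ (m + 1 - (0 + 1) - 1)
          = ((m : ℕ) : A) * (-1) ^ (m - 1) := by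
        rw [show (0 + 1 : ℕ) = 1 from rfl, hc1]
        norm_num
      rw [e0, e1]
      have key : (((m : ℕ) : A) * (-1) ^ (m - 1) + ((m + 1 : ℕ) : A) * (-1) ^ m) - (-1) ^ m
          = 0 := by
        cases m with
        | zero => norm_num
        | succ k =>
          rw [Nat.add_sub_cancel]
          push_cast
          rw [pow_succ]
          ring
      have hrearr : ∀ S e1 e2 d : A, e1 + e2 - d = 0 → S + e1 + e2 - d = S := by
        intro S e1 e2 d h
        have : S + e1 + e2 - d = S + (e1 + e2 - d) := by ring
        rw [this, h, add_zero]
      rw [hrearr _ _ _ _ key]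
      exact Ideal.sum_mem _ (fun i _ =>
        Ideal.mul_mem_right _ _ (Ideal.mul_mem_right _ _ (hcm i)))
    have hress : auxPi O (P.derivative.eval (-1)) = (-1 : O) ^ m := by
      have h0 : residue A (((P.derivative.eval (-1) :
          (O.comap (residue A) : Subring A)) : A) - (-1) ^ m) = 0 :=
        Ideal.Quotient.eq_zero_iff_mem.2 hs
      rw [map_sub, sub_eq_zero] at h0
      refine Subtype.ext ?_
      have hcoe2 : (((-1 : O) ^ m : O) : ResidueField A) = (-1 : ResidueField A) ^ m := by
        push_cast; ring
      rw [hcoe2]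
      exact h0.trans (by rw [map_pow, map_neg, map_one])
    rw [hress]
    exact (isUnit_one.neg.pow m)
  -- apply henselianness of A⁺
  obtain ⟨w, hwroot, hw1⟩ := HenselianLocalRing.is_henselian P hPmonic (-1) h₁' h₂'
  have hwu : IsUnit w := by
    rw [aux_isUnit_iff]
    by_contra hnu
    have hm1 : auxPi O w ∈ maximalIdeal O := (mem_maximalIdeal _).2 hnu
    have hm2 : auxPi O (w - (-1)) ∈ maximalIdeal O := (aux_mem_max_iff O _).1 hw1
    rw [map_sub] at hm2
    have hm3 : auxPi O (-1) ∈ maximalIdeal O := by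
      have h4 := Ideal.sub_mem _ hm1 hm2
      rw [sub_sub_cancel] at h4
      exact h4
    rw [map_neg, map_one] at hm3
    exact mem_nonunits_iff.1 ((mem_maximalIdeal _).1 hm3) isUnit_one.neg
  obtain ⟨W, hW⟩ := hwu
  set z : A :=
    (((W⁻¹ : (O.comap (residue A) : Subring A)ˣ) : (O.comap (residue A) : Subring A)) : A)
    with hzdef
  have hzw : z * (w : A) = 1 := by
    have h0 := congrArg (Subtype.val) W.inv_mul
    rw [hW] at h0
    push_cast at h0
    rw [hzdef]
    exact h0
  set x : A := t * (v * z) with hx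
  have hgx : g.eval x = 0 := by
    have hdeg : g.natDegree < n + 1 := by
      rw [hg, Polynomial.natDegree_taylor]; omega
    rw [Polynomial.eval_eq_sum_range' hdeg]
    have step1 : ∀ i ∈ Finset.range (n + 1), g.coeff i * x ^ i = t * (c i * z ^ i) := by
      intro i _
      match i with
      | 0 => simp [hc0, htdef]
      | 1 =>
        rw [hc1, pow_one, one_mul, hx]
        linear_combination (t * z) * huv
      | (j + 2) =>
        rw [hc2, hx]
        ring
    rw [Finset.sum_congr rfl step1, ← Finset.mul_sum]
    have step2 : ∑ i ∈ Finset.range (n + 1), c i * z ^ i = 0 := by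
      have e : ∀ i ∈ Finset.range (n + 1),
          c i * z ^ i = z ^ n * (c i * (w : A) ^ (n - i)) := by
        intro i hi
        rw [Finset.mem_range] at hi
        have hzn : z ^ n = z ^ i * z ^ (n - i) := by rw [← pow_add]; congr 1; omega
        have h1 : z ^ (n - i) * (w : A) ^ (n - i) = 1 := by rw [← mul_pow, hzw, one_pow]
        calc c i * z ^ i = c i * z ^ i * (z ^ (n - i) * (w : A) ^ (n - i)) := by
              rw [h1, mul_one]
          _ = z ^ n * (c i * (w : A) ^ (n - i)) := by rw [hzn]; ring
      rw [Finset.sum_congr rfl e, ← Finset.mul_sum, ← hval, hwroot.eq_zero]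
      push_cast
      ring
    rw [step2, mul_zero]
  refine ⟨x + a₀, ?_, ?_⟩
  · show f.eval (x + a₀) = 0
    rw [← Polynomial.taylor_eval a₀ f x]
    exact hgx
  · rw [add_sub_cancel_right]
    exact Ideal.mul_mem_right _ _ ht

end Aux4


/-- Let `A` be a local ring with residue field `k = A/m_A`, let `pr : A → k` be the
projection, and let `O ⊆ k` be a subring which is a local ring.  Set `A⁺ = pr⁻¹(O) ⊆ A`.
Then `A⁺` is a local ring (its maximal ideal, i.e. the set of non-units of `A⁺`, is the
preimage of the maximal ideal of `O`), and `A⁺` is a henselian local ring if and only if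
both `A` and `O` are henselian local rings. -/
theorem stmt_0 {A : Type*} [CommRing A] [IsLocalRing A]
    (O : Subring (IsLocalRing.ResidueField A)) [IsLocalRing O] :
    IsLocalRing (O.comap (IsLocalRing.residue A)) ∧
    (∀ x : O.comap (IsLocalRing.residue A),
      ¬ IsUnit x ↔ (⟨IsLocalRing.residue A x.1, x.2⟩ : O) ∈ IsLocalRing.maximalIdeal O) ∧
    (HenselianLocalRing (O.comap (IsLocalRing.residue A)) ↔
      HenselianLocalRing A ∧ HenselianLocalRing O) := by
  refine ⟨aux_isLocalRing O, fun x => aux_nonunit_iff O x, ?_, ?_⟩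
  · intro h
    haveI := h
    exact ⟨aux_hens_A O, aux_hens_O O⟩
  · rintro ⟨h1, h2⟩
    haveI := h1; haveI := h2
    exact aux_hens_B O
end

section
/- Let K be a field, let O be a valuation subring of K which is a henselian local ring, and let O' be a subring of K with O ⊆ O'. Then O' is a valuation subring of K and O' is a henselian local ring. (Part (i) of the paper's Lemma on joins of valuation rings.) -/
open Polynomial IsLocalRing

section Aux

variable {K : Type*} [Field K]

/-- If `O ≤ S` are valuation subrings and `x` has `S`-valuation `< 1`, then `x ∈ O`. -/
lemma aux_mem_of_val_lt_one (O S : ValuationSubring K) (h : O ≤ S) {x : K}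
    (hx : S.valuation x < 1) : x ∈ O := by
  by_cases hx0 : x = 0
  · exact hx0 ▸ zero_mem O
  rcases O.mem_or_inv_mem x with m | m
  · exact m
  · exfalso
    have hxS : x⁻¹ ∈ S := h m
    have h1 : S.valuation x⁻¹ ≤ 1 := (S.valuation_le_one_iff _).mpr hxS
    have hmul : S.valuation x * S.valuation x⁻¹ = 1 := by
      rw [← map_mul, mul_inv_cancel₀ hx0, map_one]
    have : (1 : S.ValueGroup) < 1 := by
      calc (1 : S.ValueGroup) = S.valuation x * S.valuation x⁻¹ := hmul.symm
        _ ≤ S.valuation x * 1 := mul_le_mul_right h1 _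
        _ = S.valuation x := mul_one _
        _ < 1 := hx
    exact absurd this (lt_irrefl _)

lemma aux_mem_max_of_val_lt_one (O S : ValuationSubring K) (h : O ≤ S) (x : O)
    (hx : S.valuation (x : K) < 1) : x ∈ maximalIdeal O := by
  rw [IsLocalRing.mem_maximalIdeal, mem_nonunits_iff]
  intro hu
  obtain ⟨u, rfl⟩ := hu
  have h1 : S.valuation (((u⁻¹ : Oˣ) : O) : K) ≤ 1 :=
    (S.valuation_le_one_iff _).mpr (h ((u⁻¹ : Oˣ) : O).2)
  have hmul : S.valuation ((u : O) : K) * S.valuation (((u⁻¹ : Oˣ) : O) : K) = 1 := by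
    rw [← map_mul]
    have : ((u : O) : K) * (((u⁻¹ : Oˣ) : O) : K) = 1 := by
      have h2 := congrArg (fun x : O => (x : K)) u.mul_inv
      push_cast at h2
      exact h2
    rw [this, map_one]
  have : (1 : S.ValueGroup) < 1 := by
    calc (1 : S.ValueGroup) = _ := hmul.symm
      _ ≤ S.valuation ((u : O) : K) * 1 := mul_le_mul_right h1 _
      _ = S.valuation ((u : O) : K) := mul_one _
      _ < 1 := hx
  exact absurd this (lt_irrefl _)

lemma aux_val_eq_one (S : ValuationSubring K) {x : K} (hx : x ∈ S) (hxi : x⁻¹ ∈ S)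
    (hx0 : x ≠ 0) : S.valuation x = 1 := by
  have h1 : S.valuation x ≤ 1 := (S.valuation_le_one_iff _).mpr hx
  have h2 : S.valuation x⁻¹ ≤ 1 := (S.valuation_le_one_iff _).mpr hxi
  have hmul : S.valuation x * S.valuation x⁻¹ = 1 := by
    rw [← map_mul, mul_inv_cancel₀ hx0, map_one]
  refine le_antisymm h1 ?_
  by_contra hlt
  push_neg at hlt
  have : (1 : S.ValueGroup) < 1 := by
    calc (1 : S.ValueGroup) = _ := hmul.symm
      _ ≤ S.valuation x * 1 := mul_le_mul_right h2 _
      _ = S.valuation x := mul_one _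
      _ < 1 := hlt
  exact absurd this (lt_irrefl _)

/-- An overring (as a valuation subring) of a henselian valuation subring is henselian. -/
lemma aux_henselian_of_le (O S : ValuationSubring K) [HenselianLocalRing O] (h : O ≤ S) :
    HenselianLocalRing S := by
  constructor
  intro f hf a₀ ha₀ hderiv
  -- trivial case: `a₀` is already a root
  by_cases hz : f.eval a₀ = 0
  · exact ⟨a₀, hz, by simp⟩
  set n := f.natDegree with hn
  have hn0 : n ≠ 0 := by
    intro h0
    have hf1 : f = 1 := hf.natDegree_eq_zero.mp h0
    rw [hf1] at ha₀
    simp only [Polynomial.eval_one] at ha₀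
    exact (mem_nonunits_iff.mp ((IsLocalRing.mem_maximalIdeal _).mp ha₀)) isUnit_one
  obtain ⟨m, hnm⟩ : ∃ m, n = m + 1 := ⟨n - 1, by omega⟩
  -- shift the polynomial so the approximate root is `0`
  set g : Polynomial S := f.comp (Polynomial.X + Polynomial.C a₀) with hg
  have hg0 : g.coeff 0 = f.eval a₀ := by
    rw [hg, coeff_zero_eq_eval_zero, eval_comp]; simp
  have hg1 : g.coeff 1 = f.derivative.eval a₀ := by
    have h1 : (derivative g).eval 0 = f.derivative.eval a₀ := by
      rw [hg, derivative_comp]; simp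
    rw [← h1, ← coeff_zero_eq_eval_zero, coeff_derivative]
    simp
  have hgdeg : g.natDegree = n := by
    rw [hg, natDegree_comp]; simp; rfl
  -- pass to `K`
  set v := S.valuation with hv
  set c : ℕ → K := fun i => ((g.coeff i : S) : K) with hc
  have hci : ∀ i, v (c i) ≤ 1 := fun i => S.valuation_le_one _
  have c0ne : c 0 ≠ 0 := by
    simp only [hc, hg0]
    exact_mod_cast fun hcon => hz (by exact_mod_cast hcon)
  have hvc0 : v (c 0) < 1 :=
    (S.valuation_lt_one_iff (g.coeff 0)).mp (by rw [hg0]; exact ha₀)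
  have hvc1 : v (c 1) = 1 :=
    (S.valuation_eq_one_iff (g.coeff 1)).mp (by rw [hg1]; exact hderiv)
  have c1ne : c 1 ≠ 0 := by
    intro hcon
    rw [hcon, map_zero] at hvc1
    exact zero_ne_one hvc1
  set t : K := c 0 / c 1 with ht
  have ht0 : t ≠ 0 := div_ne_zero c0ne c1ne
  have hvt : v t < 1 := by rw [ht, map_div₀, hvc1, div_one]; exact hvc0
  -- the reversed, rescaled coefficients
  set e : ℕ → K := fun i => c i * t ^ i / c 0 with he
  have he0 : e 0 = 1 := by simp [he, div_self c0ne]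
  have he1 : e 1 = 1 := by
    simp only [he, ht, pow_one]
    field_simp
  have helt : ∀ i, 2 ≤ i → v (e i) < 1 := by
    intro i hi
    have key : e i = c i * t ^ (i - 1) / c 1 := by
      obtain ⟨k, rfl⟩ : ∃ k, i = k + 2 := ⟨i - 2, by omega⟩
      show c _ * t ^ (k + 2) / c 0 = c _ * t ^ (k + 2 - 1) / c 1
      rw [ht]
      have : k + 2 - 1 = k + 1 := rfl
      rw [this]
      field_simp
      have h1 : c 1 * (c 1)⁻¹ = 1 := mul_inv_cancel₀ c1ne
      linear_combination (c (k + 2) * c 0 ^ 2 * c 0 ^ k * (c 1)⁻¹ ^ k * (c 1)⁻¹) * h1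
    have hpow : v t ^ (i - 1) < 1 := by
      obtain ⟨k, hk⟩ : ∃ k, i - 1 = k + 1 := ⟨i - 2, by omega⟩
      rw [hk, pow_succ]
      calc v t ^ k * v t ≤ 1 * v t := mul_le_mul_left (pow_le_one' hvt.le k) _
        _ = v t := one_mul _
        _ < 1 := hvt
    rw [key, map_div₀, map_mul, map_pow, hvc1, div_one]
    calc v (c i) * v t ^ (i - 1) ≤ 1 * v t ^ (i - 1) := mul_le_mul_left (hci i) _
      _ = v t ^ (i - 1) := one_mul _
      _ < 1 := hpow
  have heO : ∀ i, e i ∈ O := by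
    intro i
    match i with
    | 0 => rw [he0]; exact one_mem _
    | 1 => rw [he1]; exact one_mem _
    | (k + 2) => exact aux_mem_of_val_lt_one O S h (helt _ (by omega))
  set E : ℕ → O := fun i => ⟨e i, heO i⟩ with hE
  have hE0 : E 0 = 1 := Subtype.ext he0
  -- the reversed polynomial over `O`
  set Hp : Polynomial O := ∑ i ∈ Finset.range (n + 1),
    Polynomial.C (E i) * Polynomial.X ^ (n - i) with hHp
  set HK : Polynomial K := ∑ i ∈ Finset.range (n + 1),
    Polynomial.C (e i) * Polynomial.X ^ (n - i) with hHK
  have hHmap : Hp.map (algebraMap O K) = HK := by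
    rw [hHp, hHK, Polynomial.map_sum]
    refine Finset.sum_congr rfl fun i _ => ?_
    rw [Polynomial.map_mul, Polynomial.map_pow, Polynomial.map_C, Polynomial.map_X]
    rfl
  have hHKeval : ∀ x : K, HK.eval x = ∑ i ∈ Finset.range (n + 1), e i * x ^ (n - i) := by
    intro x
    rw [hHK, Polynomial.eval_finset_sum]
    refine Finset.sum_congr rfl fun i _ => ?_
    simp
  -- `Hp` is monic
  have hHdeg : Hp.natDegree ≤ n := by
    rw [hHp]
    refine Polynomial.natDegree_sum_le_of_forall_le _ _ fun i _ => ?_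
    calc (Polynomial.C (E i) * Polynomial.X ^ (n - i)).natDegree
        ≤ (Polynomial.C (E i)).natDegree + (Polynomial.X ^ (n - i) : Polynomial O).natDegree :=
          Polynomial.natDegree_mul_le
      _ ≤ n := by rw [Polynomial.natDegree_C, Polynomial.natDegree_X_pow]; omega
  have hHcoeff : Hp.coeff n = 1 := by
    rw [hHp, Polynomial.finset_sum_coeff]
    rw [Finset.sum_eq_single 0]
    · rw [Polynomial.coeff_C_mul, Nat.sub_zero, Polynomial.coeff_X_pow, if_pos rfl, mul_one, hE0]
    · intro i hi hne
      have hi' : i ≤ n := Nat.lt_succ_iff.mp (Finset.mem_range.mp hi)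
      rw [Polynomial.coeff_C_mul, Polynomial.coeff_X_pow, if_neg (by omega), mul_zero]
    · intro hcon
      exact absurd (Finset.mem_range.mpr (by omega)) hcon
  have hHmonic : Hp.Monic := Polynomial.monic_of_natDegree_le_of_coeff_eq_one n hHdeg hHcoeff
  -- first Hensel hypothesis : `Hp.eval (-1)` is in the maximal ideal of `O`
  have himg : ∀ x : O, (algebraMap O K) (Hp.eval x) = HK.eval ((x : O) : K) := by
    intro x
    rw [← hHmap, Polynomial.eval_map, ← ValuationSubring.algebraMap_apply,
      Polynomial.eval₂_at_apply]
  have himgd : ∀ x : O, (algebraMap O K) (Hp.derivative.eval x)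
      = HK.derivative.eval ((x : O) : K) := by
    intro x
    rw [← hHmap, Polynomial.derivative_map, Polynomial.eval_map,
      ← ValuationSubring.algebraMap_apply, Polynomial.eval₂_at_apply]
  have hvone : ∀ k : ℕ, v ((-1 : K) ^ k) = 1 := by
    intro k
    rw [map_pow, Valuation.map_neg, map_one, one_pow]
  have memA : Hp.eval (-1) ∈ maximalIdeal O := by
    apply aux_mem_max_of_val_lt_one O S h
    have hval : ((Hp.eval (-1) : O) : K) = HK.eval (-1) := by
      have h1 := himg (-1)
      rw [ValuationSubring.algebraMap_apply] at h1
      rw [h1, show (((-1 : O)) : K) = (-1 : K) by push_cast; ring]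
    rw [hval, hHKeval]
    have hsplit : ∑ i ∈ Finset.range (n + 1), e i * (-1 : K) ^ (n - i)
        = ∑ i ∈ Finset.range m, e (i + 2) * (-1 : K) ^ (n - (i + 2)) := by
      rw [hnm]
      rw [Finset.sum_range_succ' (fun i => e i * (-1 : K) ^ (m + 1 - i)) (m + 1)]
      rw [Finset.sum_range_succ' (fun i => e (i + 1) * (-1 : K) ^ (m + 1 - (i + 1))) m]
      have h01 : e 1 * (-1 : K) ^ (m + 1 - 1) + e 0 * (-1 : K) ^ (m + 1 - 0) = 0 := by
        rw [he0, he1]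
        simp only [Nat.add_sub_cancel, Nat.sub_zero, one_mul, pow_succ]
        ring
      rw [add_assoc, h01, add_zero]
    rw [hsplit]
    apply Valuation.map_sum_lt _ one_ne_zero
    intro i _
    rw [map_mul, hvone, mul_one]
    exact helt _ (by omega)
  -- second Hensel hypothesis : `Hp.derivative.eval (-1)` is a unit of `O`
  have hHKd : HK.derivative.eval (-1)
      = ∑ i ∈ Finset.range (n + 1), e i * (((n - i : ℕ) : K) * (-1 : K) ^ (n - i - 1)) := by
    rw [hHK, Polynomial.derivative_sum, Polynomial.eval_finset_sum]
    refine Finset.sum_congr rfl fun i _ => ?_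
    rw [Polynomial.derivative_C_mul, Polynomial.derivative_X_pow]
    simp
  have hBsub : Hp.derivative.eval (-1) - (-1 : O) ^ m ∈ maximalIdeal O := by
    apply aux_mem_max_of_val_lt_one O S h
    have hval : ((Hp.derivative.eval (-1) : O) : K) = HK.derivative.eval (-1) := by
      have h1 := himgd (-1)
      rw [ValuationSubring.algebraMap_apply] at h1
      rw [h1, show (((-1 : O)) : K) = (-1 : K) by push_cast; ring]
    have hcast : (((Hp.derivative.eval (-1) - (-1 : O) ^ m : O)) : K)
        = HK.derivative.eval (-1) - (-1 : K) ^ m := by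
      push_cast [hval]
      ring
    rw [hcast, hHKd]
    have hsplit : ∑ i ∈ Finset.range (n + 1), e i * (((n - i : ℕ) : K) * (-1 : K) ^ (n - i - 1))
        = (∑ i ∈ Finset.range m, e (i + 2)
            * (((n - (i + 2) : ℕ) : K) * (-1 : K) ^ (n - (i + 2) - 1))) + (-1 : K) ^ m := by
      rw [hnm]
      rw [Finset.sum_range_succ'
        (fun i => e i * (((m + 1 - i : ℕ) : K) * (-1 : K) ^ (m + 1 - i - 1))) (m + 1)]
      rw [Finset.sum_range_succ'
        (fun i => e (i + 1) * (((m + 1 - (i + 1) : ℕ) : K) * (-1 : K) ^ (m + 1 - (i + 1) - 1))) m]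
      rw [add_assoc]
      congr 1
      rw [he0, he1]
      simp only [one_mul]
      rcases m with _ | k
      · norm_num
      · have e1 : k + 1 + 1 - (0 + 1) = k + 1 := by omega
        have e2 : k + 1 + 1 - (0 + 1) - 1 = k := by omega
        have e3 : k + 1 + 1 - 0 = k + 2 := by omega
        have e4 : k + 1 + 1 - 0 - 1 = k + 1 := by omega
        rw [e2, e1, e4, e3, pow_succ]
        push_cast
        ring
    rw [hsplit, add_sub_cancel_right]
    apply Valuation.map_sum_lt _ one_ne_zero
    intro i _
    rw [map_mul, map_mul, hvone, mul_one]
    have hnat : v (((n - (i + 2) : ℕ) : K)) ≤ 1 :=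
      (S.valuation_le_one_iff _).mpr (by exact_mod_cast SetLike.coe_mem (((n - (i + 2) : ℕ) : S)))
    calc v (e (i + 2)) * v (((n - (i + 2) : ℕ) : K))
        ≤ v (e (i + 2)) * 1 := mul_le_mul_right hnat _
      _ = v (e (i + 2)) := mul_one _
      _ < 1 := helt _ (by omega)
  have unitB : IsUnit (Hp.derivative.eval (-1)) := by
    by_contra hB
    have hBm : Hp.derivative.eval (-1) ∈ maximalIdeal O :=
      (IsLocalRing.mem_maximalIdeal _).mpr (mem_nonunits_iff.mpr hB)
    have hσ : ((-1 : O) ^ m) ∈ maximalIdeal O := by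
      have := Ideal.sub_mem _ hBm hBsub
      simpa using this
    exact (mem_nonunits_iff.mp ((IsLocalRing.mem_maximalIdeal _).mp hσ))
      ((isUnit_one.neg).pow m)
  -- apply Hensel's lemma in `O`
  obtain ⟨z, hzroot, hzmem⟩ := HenselianLocalRing.is_henselian Hp hHmonic (-1) memA unitB
  have hzu : IsUnit z := by
    by_contra hzn
    have hzm : z ∈ maximalIdeal O := (IsLocalRing.mem_maximalIdeal _).mpr
      (mem_nonunits_iff.mpr hzn)
    have hneg : (-1 : O) ∈ maximalIdeal O := by
      have h2 := Ideal.sub_mem _ hzm hzmem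
      simp only [sub_sub_cancel] at h2
      exact h2
    exact (mem_nonunits_iff.mp ((IsLocalRing.mem_maximalIdeal _).mp hneg)) isUnit_one.neg
  obtain ⟨zu, hzu_eq⟩ := hzu
  set zK : K := (z : K) with hzK
  have hzK0 : zK ≠ 0 := by
    intro h0
    rw [hzK] at h0
    have : z = 0 := by exact_mod_cast h0
    rw [this] at hzu_eq
    exact (by simpa [hzu_eq] using zu.isUnit : IsUnit (0 : O)).ne_zero rfl
  have hinvO : zK⁻¹ ∈ O := by
    have h1 : zK * (((zu⁻¹ : Oˣ) : O) : K) = 1 := by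
      have h2 : (zu : O) * ((zu⁻¹ : Oˣ) : O) = 1 := by exact_mod_cast zu.mul_inv
      rw [hzu_eq] at h2
      rw [hzK]
      exact_mod_cast congrArg (fun x : O => (x : K)) h2
    have := eq_inv_of_mul_eq_one_right h1
    rw [← this]
    exact SetLike.coe_mem _
  have hvz : v zK = 1 := aux_val_eq_one S (h z.2) (h hinvO) hzK0
  have hHKz : HK.eval zK = 0 := by
    have h1 := himg z
    rw [show Hp.eval z = 0 from hzroot, map_zero] at h1
    rw [hzK]
    exact h1.symm
  -- transfer the root back
  set G : Polynomial K := g.map (algebraMap S K) with hG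
  have hGdeg : G.natDegree < n + 1 :=
    lt_of_le_of_lt (le_trans Polynomial.natDegree_map_le (le_of_eq hgdeg))
      (Nat.lt_succ_self n)
  have hGcoeff : ∀ i, G.coeff i = c i := fun i => by
    rw [hG, Polynomial.coeff_map]; rfl
  have hkey : c 0 * HK.eval zK = zK ^ n * G.eval (t / zK) := by
    rw [hHKeval, Polynomial.eval_eq_sum_range' hGdeg, Finset.mul_sum, Finset.mul_sum]
    refine Finset.sum_congr rfl fun i hi => ?_
    have hi' : i ≤ n := Nat.lt_succ_iff.mp (Finset.mem_range.mp hi)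
    rw [hGcoeff]
    simp only [he]
    have hzpow : zK ^ n = zK ^ (n - i) * zK ^ i := (pow_sub_mul_pow zK hi').symm
    rw [hzpow, ht, div_pow]
    field_simp
    have h1 : c 1 ^ i * (c 1)⁻¹ ^ i = 1 := by rw [← mul_pow, mul_inv_cancel₀ c1ne, one_pow]
    have h2 : zK ^ i * zK⁻¹ ^ i = 1 := by rw [← mul_pow, mul_inv_cancel₀ hzK0, one_pow]
    linear_combination (-(c i * c 0 ^ i)) * h1 + (-(c i * c 0 ^ i * (c 1 ^ i * (c 1)⁻¹ ^ i))) * h2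
  have hGz : G.eval (t / zK) = 0 := by
    have h2 : zK ^ n * G.eval (t / zK) = 0 := by rw [← hkey, hHKz, mul_zero]
    rcases mul_eq_zero.mp h2 with h3 | h3
    · exact absurd h3 (pow_ne_zero _ hzK0)
    · exact h3
  have hwmemS : t / zK ∈ S := by
    rw [← S.valuation_le_one_iff]
    show v _ ≤ 1
    rw [map_div₀, hvz, div_one]
    exact hvt.le
  set w : S := ⟨t / zK, hwmemS⟩ with hw
  have hweval : g.eval w = 0 := by
    have h1 : (algebraMap S K) (g.eval w) = G.eval (t / zK) := by
      rw [hG, Polynomial.eval_map]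
      exact (Polynomial.eval₂_at_apply (algebraMap S K) w).symm
    rw [hGz, ValuationSubring.algebraMap_apply] at h1
    exact_mod_cast h1
  refine ⟨w + a₀, ?_, ?_⟩
  · show f.eval (w + a₀) = 0
    have hcomp : g.eval w = f.eval (w + a₀) := by rw [hg, Polynomial.eval_comp]; simp
    rw [← hcomp, hweval]
  · have hws : w + a₀ - a₀ = w := add_sub_cancel_right w a₀
    rw [hws]
    exact (S.valuation_lt_one_iff w).mpr
      (by show v (t / zK) < 1; rw [map_div₀, hvz, div_one]; exact hvt)

end Aux

/-- Let `K` be a field, let `O` be a valuation subring of `K` which is a henselian local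
ring, and let `O'` be a subring of `K` with `O ⊆ O'`.  Then `O'` is a valuation subring
of `K` and `O'` is a henselian local ring. -/
theorem stmt_1 {K : Type*} [Field K] (O : ValuationSubring K) [HenselianLocalRing O]
    (O' : Subring K) (h : O.toSubring ≤ O') :
    (∀ x : K, x ≠ 0 → x ∈ O' ∨ x⁻¹ ∈ O') ∧ HenselianLocalRing O' := by
  constructor
  · intro x _
    exact (O.mem_or_inv_mem x).imp (fun hm => h hm) (fun hm => h hm)
  · exact aux_henselian_of_le O (O.ofLE O' h) h
end

section
/- Let X be a spectral topological space such that every connected component of X contains exactly one closed point. Then the composite of the inclusion X^c ↪ X of the subspace of closed points with the quotient map X → π₀(X) onto the space of connected components is a homeomorphism X^c → π₀(X). In particular X^c and π₀(X) are profinite (compact, Hausdorff, totally disconnected) spaces. -/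
universe u

open PrimeSpectrum Set

section Algebra

variable {R : Type*} [CommRing R]

/-- Idempotents in the quotient by an ideal generated by idempotents contained in a prime
are trivial. -/
lemma idem_quot_trivial (p : PrimeSpectrum R)
    (a : R ⧸ Ideal.span {e : R | IsIdempotentElem e ∧ e ∈ p.asIdeal})
    (ha : IsIdempotentElem a) : a = 0 ∨ a = 1 := by
  classical
  obtain ⟨x, rfl⟩ := Ideal.Quotient.mk_surjective a
  set S : Set R := {e : R | IsIdempotentElem e ∧ e ∈ p.asIdeal} with hS
  set I : Ideal R := Ideal.span S with hI
  have hx : x * x - x ∈ I := by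
    rw [← Ideal.Quotient.eq_zero_iff_mem, map_sub, map_mul]
    rw [IsIdempotentElem] at ha
    rw [ha, sub_self]
  rw [hI, Ideal.span, Submodule.mem_span_set'] at hx
  obtain ⟨n, f, g, hfg⟩ := hx
  set E : R := 1 - ∏ i, (1 - (g i : R)) with hE
  have hEidem : IsIdempotentElem E := by
    refine IsIdempotentElem.one_sub ?_
    refine Finset.prod_induction _ IsIdempotentElem (fun a b ha hb => ha.mul hb)
      IsIdempotentElem.one (fun i _ => (g i).2.1.one_sub)
  have hEp : E ∈ p.asIdeal := by
    rw [← Ideal.Quotient.eq_zero_iff_mem, hE, map_sub, map_one, map_prod]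
    have : ∀ i : Fin n, Ideal.Quotient.mk p.asIdeal (1 - (g i : R)) = 1 := by
      intro i
      rw [map_sub, map_one, Ideal.Quotient.eq_zero_iff_mem.2 (g i).2.2, sub_zero]
    rw [Finset.prod_congr rfl (fun i _ => this i), Finset.prod_const_one, sub_self]
  have hgE : ∀ i : Fin n, (g i : R) = (g i : R) * E := by
    intro i
    have hzero : (g i : R) * ∏ j, (1 - (g j : R)) = 0 := by
      rw [← Finset.mul_prod_erase Finset.univ _ (Finset.mem_univ i), ← mul_assoc]
      have : (g i : R) * (1 - (g i : R)) = 0 := by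
        have := (g i).2.1
        rw [IsIdempotentElem] at this
        rw [mul_sub, mul_one, this, sub_self]
      rw [this, zero_mul]
    rw [hE, mul_sub, mul_one, hzero, sub_zero]
  have hxE : x * x - x = (x * x - x) * E := by
    calc x * x - x = ∑ i, f i • (g i : R) := hfg.symm
    _ = ∑ i, f i • ((g i : R) * E) := by
        refine Finset.sum_congr rfl fun i _ => by rw [← hgE i]
    _ = (∑ i, f i • (g i : R)) * E := by
        rw [Finset.sum_mul]
        refine Finset.sum_congr rfl fun i _ => by rw [smul_eq_mul, smul_eq_mul, mul_assoc]
    _ = (x * x - x) * E := by rw [hfg]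
  set u : R := x * (1 - E) with hu
  have huidem : IsIdempotentElem u := by
    rw [IsIdempotentElem, hu]
    have hEE : E * E = E := hEidem
    linear_combination hxE + x * x * hEE
  have hEI : E ∈ I := Ideal.subset_span ⟨hEidem, hEp⟩
  have hmku : Ideal.Quotient.mk I u = Ideal.Quotient.mk I x := by
    rw [Ideal.Quotient.mk_eq_mk_iff_sub_mem]
    have : u - x = (-x) * E := by rw [hu]; ring
    rw [this]
    exact I.mul_mem_left _ hEI
  have hmem : u * (1 - u) ∈ p.asIdeal := by
    have : u * (1 - u) = 0 := by
      rw [mul_sub, mul_one, huidem, sub_self]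
    rw [this]; exact p.asIdeal.zero_mem
  rcases p.2.mem_or_mem hmem with h | h
  · left
    rw [← hmku, Ideal.Quotient.eq_zero_iff_mem]
    exact Ideal.subset_span ⟨huidem, h⟩
  · right
    have : Ideal.Quotient.mk I (1 - u) = 0 :=
      Ideal.Quotient.eq_zero_iff_mem.2 (Ideal.subset_span ⟨huidem.one_sub, h⟩)
    rw [map_sub, map_one, sub_eq_zero] at this
    rw [← hmku, ← this]

/-- The connected component of a point in a prime spectrum is the zero locus of the
idempotents contained in the prime. -/
lemma connectedComponent_eq_zeroLocus (p : PrimeSpectrum R) :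
    connectedComponent p = zeroLocus {e : R | IsIdempotentElem e ∧ e ∈ p.asIdeal} := by
  classical
  set S : Set R := {e : R | IsIdempotentElem e ∧ e ∈ p.asIdeal} with hS
  set I : Ideal R := Ideal.span S with hIdef
  apply Subset.antisymm
  · intro q hq
    rw [mem_zeroLocus]
    intro e he
    have hclo : IsClopen (zeroLocus {e} : Set (PrimeSpectrum R)) :=
      isClopen_iff_zeroLocus.mpr ⟨e, he.1, rfl⟩
    have hp : p ∈ zeroLocus {e} := (mem_zeroLocus _ _).2 (singleton_subset_iff.2 he.2)
    have := hclo.connectedComponent_subset hp hq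
    exact (mem_zeroLocus _ _).1 this (mem_singleton e)
  · have hp : p ∈ zeroLocus S := (mem_zeroLocus _ _).2 fun e he => he.2
    refine IsPreconnected.subset_connectedComponent ?_ hp
    have hrange : comap (Ideal.Quotient.mk I) '' univ = zeroLocus S := by
      rw [image_univ, range_comap_of_surjective _ _ Ideal.Quotient.mk_surjective,
        Ideal.mk_ker, hIdef]
      exact zeroLocus_span S
    have hpc : PreconnectedSpace (PrimeSpectrum (R ⧸ I)) := by
      rw [preconnectedSpace_iff_univ]
      rintro U V hU hV hcover ⟨x, -, hxU⟩ ⟨y, -, hyV⟩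
      by_contra hcon
      rw [not_nonempty_iff_eq_empty] at hcon
      have hUV : U ∩ V = ∅ := by
        rw [eq_empty_iff_forall_notMem]
        intro z hz
        exact eq_empty_iff_forall_notMem.1 hcon z ⟨trivial, hz⟩
      have hclopen : IsClopen U := by
        refine ⟨?_, hU⟩
        have : Uᶜ = V := by
          apply Subset.antisymm
          · intro z hz
            rcases hcover (mem_univ z) with h | h
            · exact absurd h hz
            · exact h
          · intro z hz hzU
            exact eq_empty_iff_forall_notMem.1 hUV z ⟨hzU, hz⟩
        rw [← isOpen_compl_iff, this]
        exact hV
      obtain ⟨e, he, rfl⟩ := PrimeSpectrum.isClopen_iff.mp hclopen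
      rcases idem_quot_trivial p e he with h | h
      · rw [h] at hxU
        simp [basicOpen_zero] at hxU
      · have hy1 : y ∈ (basicOpen e : Set (PrimeSpectrum (R ⧸ I))) := by
          rw [h]; simp [basicOpen_one]
        exact eq_empty_iff_forall_notMem.1 hUV y ⟨hy1, hyV⟩
    rw [← hrange]
    exact (preconnectedSpace_iff_univ.1 hpc).image _ (continuous_comap _).continuousOn

/-- Separation of distinct connected components in a prime spectrum by clopen sets. -/
lemma spec_clopen_sep {p q : PrimeSpectrum R} (h : q ∉ connectedComponent p) :
    ∃ U : Set (PrimeSpectrum R), IsClopen U ∧ p ∈ U ∧ q ∉ U := by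
  rw [connectedComponent_eq_zeroLocus, mem_zeroLocus] at h
  obtain ⟨e, he, hq⟩ := not_subset.mp h
  refine ⟨zeroLocus {e}, isClopen_iff_zeroLocus.mpr ⟨e, he.1, rfl⟩,
    (mem_zeroLocus _ _).2 (singleton_subset_iff.2 he.2), ?_⟩
  intro hmem
  exact hq ((mem_zeroLocus _ _).1 hmem (mem_singleton e))

end Algebra

/-- Let `X` be a spectral topological space (i.e. homeomorphic to the prime spectrum of
some commutative ring) such that every connected component of `X` contains exactly one
closed point.  Then the composite of the inclusion `X^c ↪ X` of the subspace of closed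
points with the quotient map `X → π₀(X)` onto the space of connected components is a
homeomorphism `X^c → π₀(X)`.  In particular `X^c` and `π₀(X)` are profinite (compact,
Hausdorff, totally disconnected) spaces. -/
theorem stmt_7 {X : Type u} [TopologicalSpace X]
    (hspec : ∃ (R : Type u) (_ : CommRing R), Nonempty (X ≃ₜ PrimeSpectrum R))
    (hcomp : ∀ x : X, ∃! y : X, y ∈ connectedComponent x ∧ IsClosed ({y} : Set X)) :
    (∃ h : {x : X // IsClosed ({x} : Set X)} ≃ₜ ConnectedComponents X,
      ∀ x : {x : X // IsClosed ({x} : Set X)}, h x = ConnectedComponents.mk x.1) ∧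
    CompactSpace {x : X // IsClosed ({x} : Set X)} ∧
    T2Space {x : X // IsClosed ({x} : Set X)} ∧
    TotallyDisconnectedSpace {x : X // IsClosed ({x} : Set X)} ∧
    CompactSpace (ConnectedComponents X) ∧
    T2Space (ConnectedComponents X) ∧
    TotallyDisconnectedSpace (ConnectedComponents X) := by
  obtain ⟨R, _, ⟨h0⟩⟩ := hspec
  haveI : CompactSpace X := h0.symm.compactSpace
  -- separation of components by clopens
  have hsep : ∀ x y : X, y ∉ connectedComponent x →
      ∃ U : Set X, IsClopen U ∧ x ∈ U ∧ y ∉ U := by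
    intro x y hxy
    have h' : h0 y ∉ connectedComponent (h0 x) := by
      intro hmem
      apply hxy
      have himg : IsPreconnected (h0.symm '' connectedComponent (h0 x)) :=
        isPreconnected_connectedComponent.image _ h0.symm.continuous.continuousOn
      have hx : x ∈ h0.symm '' connectedComponent (h0 x) :=
        ⟨h0 x, mem_connectedComponent, h0.symm_apply_apply x⟩
      have hy : y ∈ h0.symm '' connectedComponent (h0 x) :=
        ⟨h0 y, hmem, h0.symm_apply_apply y⟩
      exact IsPreconnected.subset_connectedComponent himg hx hy
    obtain ⟨V, hV, hxV, hyV⟩ := spec_clopen_sep h'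
    exact ⟨h0 ⁻¹' V, hV.preimage h0.continuous, hxV, hyV⟩
  -- every point specializes to a unique closed point in its component
  have hcc : ∀ z : X, ∃ c : X, IsClosed ({c} : Set X) ∧ c ∈ connectedComponent z ∧
      c ∈ closure {z} := by
    intro z
    obtain ⟨m, hm, hle⟩ := Ideal.exists_le_maximal (h0 z).asIdeal (h0 z).2.ne_top
    set q : PrimeSpectrum R := ⟨m, hm.isPrime⟩ with hq
    refine ⟨h0.symm q, ?_, ?_, ?_⟩
    · have h1 : IsClosed ({q} : Set (PrimeSpectrum R)) :=
        (isClosed_singleton_iff_isMaximal q).2 hm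
      have h2 := h1.preimage h0.continuous
      have h3 : h0 ⁻¹' {q} = {h0.symm q} := by
        ext a
        simp only [mem_preimage, mem_singleton_iff]
        constructor
        · intro h; rw [← h, h0.symm_apply_apply]
        · intro h; rw [h, h0.apply_symm_apply]
      rwa [h3] at h2
    · -- closure {z} is connected and contains the closed point
      have hspec' : (h0 z) ⤳ q := (le_iff_specializes (h0 z) q).1 hle
      have hspec'' : z ⤳ h0.symm q := by
        have := hspec'.map h0.symm.continuous
        rwa [h0.symm_apply_apply] at this
      have hmem : h0.symm q ∈ closure ({z} : Set X) :=
        specializes_iff_mem_closure.1 hspec''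
      have hclconn : IsPreconnected (closure ({z} : Set X)) :=
        isPreconnected_singleton.closure
      exact hclconn.subset_connectedComponent (subset_closure rfl) hmem
    · have hspec' : (h0 z) ⤳ q := (le_iff_specializes (h0 z) q).1 hle
      have hspec'' : z ⤳ h0.symm q := by
        have := hspec'.map h0.symm.continuous
        rwa [h0.symm_apply_apply] at this
      exact specializes_iff_mem_closure.1 hspec''
  -- if c ∈ closure {z} and c ∈ U open then z ∈ U
  have hup : ∀ {U : Set X}, IsOpen U → ∀ {z c : X}, c ∈ closure ({z} : Set X) → c ∈ U →
      z ∈ U := by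
    intro U hU z c hc hcU
    obtain ⟨w, hwU, hw⟩ := _root_.mem_closure_iff.1 hc U hU hcU
    rw [mem_singleton_iff] at hw
    rwa [hw] at hwU
  -- the set of closed points is compact
  have hScompact : IsCompact {x : X | IsClosed ({x} : Set X)} := by
    refine isCompact_of_finite_subcover fun {ι} U hU hSU => ?_
    have hXU : (univ : Set X) ⊆ ⋃ i, U i := by
      intro z _
      obtain ⟨c, hc_closed, _, hc_cl⟩ := hcc z
      obtain ⟨i, hi⟩ := mem_iUnion.1 (hSU hc_closed)
      exact mem_iUnion.2 ⟨i, hup (hU i) hc_cl hi⟩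
    obtain ⟨t, ht⟩ := isCompact_univ.elim_finite_subcover U hU hXU
    exact ⟨t, (subset_univ _).trans ht⟩
  haveI hT : CompactSpace {x : X // IsClosed ({x} : Set X)} :=
    isCompact_iff_compactSpace.mp hScompact
  -- T2 for connected components
  haveI hT2 : T2Space (ConnectedComponents X) := by
    constructor
    intro a b hab
    obtain ⟨x, rfl⟩ := ConnectedComponents.surjective_coe a
    obtain ⟨y, rfl⟩ := ConnectedComponents.surjective_coe b
    have hy : y ∉ connectedComponent x := by
      intro hy
      exact hab (ConnectedComponents.coe_eq_coe'.2 hy).symm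
    obtain ⟨U, hU, hxU, hyU⟩ := hsep x y hy
    have hpreU : (ConnectedComponents.mk) ⁻¹' (ConnectedComponents.mk '' U) = U := by
      rw [connectedComponents_preimage_image]
      exact hU.biUnion_connectedComponent_eq
    have hpreUc : (ConnectedComponents.mk) ⁻¹' (ConnectedComponents.mk '' Uᶜ) = Uᶜ := by
      rw [connectedComponents_preimage_image]
      exact hU.compl.biUnion_connectedComponent_eq
    refine ⟨ConnectedComponents.mk '' U, ConnectedComponents.mk '' Uᶜ, ?_, ?_,
      ⟨x, hxU, rfl⟩, ⟨y, hyU, rfl⟩, ?_⟩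
    · rw [← ConnectedComponents.isQuotientMap_coe.isOpen_preimage, hpreU]
      exact hU.2
    · rw [← ConnectedComponents.isQuotientMap_coe.isOpen_preimage, hpreUc]
      exact hU.compl.2
    · rw [disjoint_left]
      rintro c ⟨w, hwU, rfl⟩ ⟨v, hvU, hv⟩
      have : connectedComponent v = connectedComponent w :=
        ConnectedComponents.coe_eq_coe.1 hv
      have hvw : v ∈ connectedComponent w := this ▸ mem_connectedComponent
      exact hvU (hU.connectedComponent_subset hwU hvw)
  -- the bijection
  set f : {x : X // IsClosed ({x} : Set X)} → ConnectedComponents X :=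
    fun x => ConnectedComponents.mk x.1 with hf
  have hfbij : Function.Bijective f := by
    constructor
    · rintro ⟨x, hx⟩ ⟨y, hy⟩ hxy
      have hcomp_eq : connectedComponent x = connectedComponent y :=
        ConnectedComponents.coe_eq_coe.1 hxy
      obtain ⟨c, -, hcuniq⟩ := hcomp x
      have h1 : x = c := hcuniq x ⟨mem_connectedComponent, hx⟩
      have h2 : y = c := hcuniq y ⟨hcomp_eq ▸ mem_connectedComponent, hy⟩
      exact Subtype.ext (h1.trans h2.symm)
    · intro a
      obtain ⟨x, rfl⟩ := ConnectedComponents.surjective_coe a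
      obtain ⟨c, ⟨hcmem, hcclosed⟩, -⟩ := hcomp x
      exact ⟨⟨c, hcclosed⟩, ConnectedComponents.coe_eq_coe'.2 hcmem⟩
  have hfcont : Continuous f := ConnectedComponents.continuous_coe.comp continuous_subtype_val
  set e : {x : X // IsClosed ({x} : Set X)} ≃ ConnectedComponents X :=
    Equiv.ofBijective f hfbij with he
  have hecont : Continuous e := hfcont
  set homeo : {x : X // IsClosed ({x} : Set X)} ≃ₜ ConnectedComponents X :=
    hecont.homeoOfEquivCompactToT2 with hhomeo
  haveI hcompPi : CompactSpace (ConnectedComponents X) := by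
    constructor
    have := isCompact_univ (X := X) |>.image ConnectedComponents.continuous_coe
    rwa [image_univ, ConnectedComponents.range_coe] at this
  haveI : T2Space {x : X // IsClosed ({x} : Set X)} := homeo.isEmbedding.t2Space
  haveI : TotallyDisconnectedSpace {x : X // IsClosed ({x} : Set X)} := by
    rw [totallyDisconnectedSpace_iff_connectedComponent_subsingleton]
    intro x
    intro a ha b hb
    have himg : IsPreconnected ((Subtype.val : _ → X) '' connectedComponent x) :=
      isPreconnected_connectedComponent.image _ continuous_subtype_val.continuousOn
    have h1 : f a = f x := ConnectedComponents.coe_eq_coe'.2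
      ((himg.subset_connectedComponent ⟨x, mem_connectedComponent, rfl⟩) ⟨a, ha, rfl⟩)
    have h2 : f b = f x := ConnectedComponents.coe_eq_coe'.2
      ((himg.subset_connectedComponent ⟨x, mem_connectedComponent, rfl⟩) ⟨b, hb, rfl⟩)
    exact hfbij.1 (h1.trans h2.symm)
  exact ⟨⟨homeo, fun x => rfl⟩, inferInstance, inferInstance, inferInstance,
    inferInstance, inferInstance, inferInstance⟩
end

section
/- Consider schemes with morphisms X'' → X', X' → X, S'' → S', S' → S, X'' → S'', X' → S', X → S forming two commutative squares (X'' → X' over S'' → S', and X' → X over S' → S). If both squares have universally closed diagonal, i.e., the induced morphisms X'' → X' ×_{S'} S'' and X' → X ×_S S' are universally closed, then the composed square has universally closed diagonal: the induced morphism X'' → X ×_S S'' is universally closed. (Part (i), 'Composition', of the paper's lemma on squares with universally closed diagonal.) -/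
open CategoryTheory CategoryTheory.Limits AlgebraicGeometry

/-- (Composition of squares with universally closed diagonal.)  Given two commutative
squares of schemes, `X'' → X'` over `S'' → S'` and `X' → X` over `S' → S`, whose
diagonals `X'' → X' ×_{S'} S''` and `X' → X ×_S S'` are universally closed, the composed
square `X'' → X` over `S'' → S` has universally closed diagonal, i.e. the induced
morphism `X'' → X ×_S S''` is universally closed. -/
theorem stmt_9 {X'' X' X S'' S' S : Scheme}
    (a : X'' ⟶ X') (b : X' ⟶ X) (f'' : X'' ⟶ S'') (f' : X' ⟶ S') (f : X ⟶ S)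
    (g : S'' ⟶ S') (h : S' ⟶ S)
    (w1 : a ≫ f' = f'' ≫ g) (w2 : b ≫ f = f' ≫ h)
    (H1 : UniversallyClosed (pullback.lift a f'' w1 : X'' ⟶ pullback f' g))
    (H2 : UniversallyClosed (pullback.lift b f' w2 : X' ⟶ pullback f h)) :
    UniversallyClosed
      (pullback.lift (a ≫ b) f''
        (by simp only [Category.assoc]; rw [w2, reassoc_of% w1])
        : X'' ⟶ pullback f (g ≫ h)) := by
  -- The "middle" map `X' ×_{S'} S'' ⟶ X ×_S S''`.
  let m : pullback f' g ⟶ pullback f (g ≫ h) :=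
    pullback.map f' g f (g ≫ h) b (𝟙 S'') h w2.symm (by simp)
  -- The map `X ×_S S'' ⟶ X ×_S S'`.
  let n : pullback f (g ≫ h) ⟶ pullback f h :=
    pullback.map f (g ≫ h) f h (𝟙 X) g (𝟙 S) (by simp) (by simp)
  -- `X ×_S S''` is the pullback of `X ×_S S'` along `g : S'' ⟶ S'`.
  have t0 : IsPullback n (pullback.snd f (g ≫ h)) (pullback.snd f h) g := by
    refine IsPullback.of_right ?_ (by simp [n, pullback.map, pullback.lift_fst, pullback.lift_snd, pullback.lift_fst_assoc, pullback.lift_snd_assoc]) (IsPullback.of_hasPullback f h)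
    have : n ≫ pullback.fst f h = pullback.fst f (g ≫ h) := by simp [n, pullback.map, pullback.lift_fst, pullback.lift_snd, pullback.lift_fst_assoc, pullback.lift_snd_assoc]
    rw [this]
    exact IsPullback.of_hasPullback f (g ≫ h)
  -- `X' ×_{S'} S''` is the pullback of `X'` along `n`, with `m` the projection.
  have key : IsPullback (pullback.fst f' g) m (pullback.lift b f' w2) n := by
    have s : IsPullback (pullback.snd f' g) (pullback.fst f' g) g
        (pullback.lift b f' w2 ≫ pullback.snd f h) := by
      rw [pullback.lift_snd]
      exact (IsPullback.of_hasPullback f' g).flip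
    have res := IsPullback.of_right' s t0.flip
    have : (t0.flip).lift (pullback.snd f' g)
        (pullback.fst f' g ≫ pullback.lift b f' w2)
        (by rw [s.w, Category.assoc]) = m := by
      apply (t0.flip).hom_ext
      · simp [m, pullback.map, pullback.lift_fst, pullback.lift_snd, pullback.lift_fst_assoc, pullback.lift_snd_assoc]
      · apply pullback.hom_ext <;> simp [m, n, pullback.condition, pullback.map, pullback.lift_fst, pullback.lift_snd, pullback.lift_fst_assoc, pullback.lift_snd_assoc]
    rw [this] at res
    exact res.flip
  -- `m` is universally closed as a base change of `pullback.lift b f'`.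
  have hm : UniversallyClosed m := MorphismProperty.of_isPullback key H2
  -- The diagonal of the composed square factors as `pullback.lift a f'' ≫ m`.
  have factor : (pullback.lift (a ≫ b) f''
      (by simp only [Category.assoc]; rw [w2, reassoc_of% w1])
      : X'' ⟶ pullback f (g ≫ h)) = pullback.lift a f'' w1 ≫ m := by
    apply pullback.hom_ext <;> simp [m, pullback.map, pullback.lift_fst, pullback.lift_snd, pullback.lift_fst_assoc, pullback.lift_snd_assoc]
  rw [factor]
  infer_instance
end

section
/- Let A ⊆ D be an extension of integral domains and let p, q be prime ideals of A such that neither contains the other. Suppose B₁ and B₂ are subrings of D containing A such that: each B_i is a henselian local ring; p ⊆ m_{B₁} and q ⊆ m_{B₂}; every element of A \ p is invertible in B₁ and every element of A \ q is invertible in B₂; and the residue fields of B₁ and B₂ have characteristic different from 2. Then −1 is a square in D. In particular, −1 is a sum of squares in D, so no residue field of D is formally real. (The residue-characteristic-different-from-2 case of the paper's lemma that a domain containing henselizations of A at two incomparable primes has no formally real residue fields.) -/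
/-- A field is formally real if `−1` is not a sum of squares in it. -/
def FormallyRealField (K : Type*) [Field K] : Prop := ¬ IsSumSq (-1 : K)



open Polynomial IsLocalRing

/-- In a henselian local ring with residue characteristic different from 2,
`1 + u` is a square of a unit for any `u` in the maximal ideal. -/
lemma aux_sq_of_henselian {R : Type*} [CommRing R] [HenselianLocalRing R]
    (h2 : ringChar (IsLocalRing.ResidueField R) ≠ 2)
    (u : R) (hu : u ∈ maximalIdeal R) :
    ∃ c : R, IsUnit c ∧ c ^ 2 = 1 + u := by
  have h2' : IsUnit (2 : R) := by
    rw [← IsLocalRing.residue_ne_zero_iff_isUnit]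
    have : (residue R) (2 : R) = (2 : ResidueField R) := map_ofNat _ 2
    rw [this]
    exact Ring.two_ne_zero h2
  have hmonic : (X ^ 2 - C (1 + u)).Monic := monic_X_pow_sub_C _ (by norm_num)
  have heval : (X ^ 2 - C (1 + u)).eval 1 ∈ maximalIdeal R := by
    simp only [eval_sub, eval_pow, eval_X, eval_C, one_pow]
    have : (1 : R) - (1 + u) = -u := by ring
    rw [this]
    exact neg_mem hu
  have hderiv : IsUnit ((X ^ 2 - C (1 + u)).derivative.eval 1) := by
    simp only [derivative_sub, derivative_X_pow, derivative_C, sub_zero]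
    simp only [eval_mul, eval_pow, eval_X, eval_natCast, one_pow, mul_one]
    simpa using h2'
  obtain ⟨c, hroot, hc1⟩ := HenselianLocalRing.is_henselian (X ^ 2 - C (1 + u)) hmonic 1
    heval hderiv
  refine ⟨c, ?_, ?_⟩
  · by_contra hcu
    have hcm : c ∈ maximalIdeal R := hcu
    have : (1 : R) ∈ maximalIdeal R := by
      have := sub_mem hcm hc1
      simpa using this
    exact (IsLocalRing.maximalIdeal.isMaximal R).ne_top (Ideal.eq_top_of_isUnit_mem _ this isUnit_one)
  · have := hroot
    simp only [IsRoot, eval_sub, eval_pow, eval_X, eval_C, sub_eq_zero] at this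
    exact this

lemma isSumSq_of_isSquare {R : Type*} [CommRing R] {r : R} (h : IsSquare r) : IsSumSq r := by
  obtain ⟨s, rfl⟩ := h
  simpa using IsSumSq.sq_add s 0 IsSumSq.zero

/-- Let `A ⊆ D` be an extension of integral domains and `p`, `q` prime ideals of `A`
such that neither contains the other.  Suppose `B₁`, `B₂` are subrings of `D` containing
`A` such that: each `Bᵢ` is a henselian local ring; `p ⊆ m_{B₁}` and `q ⊆ m_{B₂}`; every
element of `A \ p` is invertible in `B₁` and every element of `A \ q` is invertible in
`B₂`; and the residue fields of `B₁` and `B₂` have characteristic different from `2`.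
Then `−1` is a square in `D`.  In particular `−1` is a sum of squares in `D`, so no
residue field of `D` is formally real. -/
theorem stmt_13 {D : Type*} [CommRing D] [IsDomain D] (A B₁ B₂ : Subring D)
    (hAB₁ : A ≤ B₁) (hAB₂ : A ≤ B₂)
    [HenselianLocalRing B₁] [HenselianLocalRing B₂]
    (p q : Ideal A) [p.IsPrime] [q.IsPrime] (hpq : ¬ p ≤ q) (hqp : ¬ q ≤ p)
    (hp : ∀ x : A, x ∈ p → Subring.inclusion hAB₁ x ∈ IsLocalRing.maximalIdeal B₁)
    (hq : ∀ x : A, x ∈ q → Subring.inclusion hAB₂ x ∈ IsLocalRing.maximalIdeal B₂)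
    (hp' : ∀ x : A, x ∉ p → IsUnit (Subring.inclusion hAB₁ x))
    (hq' : ∀ x : A, x ∉ q → IsUnit (Subring.inclusion hAB₂ x))
    (hchar₁ : ringChar (IsLocalRing.ResidueField B₁) ≠ 2)
    (hchar₂ : ringChar (IsLocalRing.ResidueField B₂) ≠ 2) :
    IsSquare (-1 : D) ∧ IsSumSq (-1 : D) ∧
      ∀ (P : Ideal D) [P.IsPrime],
        ¬ FormallyRealField (IsLocalRing.ResidueField (Localization.AtPrime P)) := by
  -- choose a ∈ p \ q and b ∈ q \ p
  obtain ⟨a, hap, haq⟩ : ∃ a : A, a ∈ p ∧ a ∉ q := by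
    rw [SetLike.not_le_iff_exists] at hpq; exact hpq
  obtain ⟨b, hbq, hbp⟩ : ∃ b : A, b ∈ q ∧ b ∉ p := by
    rw [SetLike.not_le_iff_exists] at hqp; exact hqp
  -- units
  obtain ⟨bu, hbu⟩ := hp' b hbp
  obtain ⟨au, hau⟩ := hq' a haq
  -- x = a/b in B₁, in the maximal ideal
  set x : B₁ := Subring.inclusion hAB₁ a * ↑bu⁻¹ with hxdef
  have hx : x ∈ maximalIdeal B₁ := Ideal.mul_mem_right _ _ (hp a hap)
  -- y = b/a in B₂, in the maximal ideal
  set y : B₂ := Subring.inclusion hAB₂ b * ↑au⁻¹ with hydef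
  have hy : y ∈ maximalIdeal B₂ := Ideal.mul_mem_right _ _ (hq b hbq)
  -- Henselian square roots
  obtain ⟨c, hcu, hc⟩ := aux_sq_of_henselian hchar₁ (x ^ 2) (Ideal.pow_mem_of_mem _ hx 2 (by norm_num))
  obtain ⟨c', _, hc'⟩ := aux_sq_of_henselian hchar₁ (-(x ^ 2)) (neg_mem (Ideal.pow_mem_of_mem _ hx 2 (by norm_num)))
  obtain ⟨d, _, hd⟩ := aux_sq_of_henselian hchar₂ (y ^ 2) (Ideal.pow_mem_of_mem _ hy 2 (by norm_num))
  obtain ⟨d', hd'u, hd'⟩ := aux_sq_of_henselian hchar₂ (-(y ^ 2)) (neg_mem (Ideal.pow_mem_of_mem _ hy 2 (by norm_num)))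
  obtain ⟨cu, hcu'⟩ := hcu
  obtain ⟨d'u, hd'u'⟩ := hd'u
  -- pass to D
  set X : D := (x : D) with hXdef
  set Y : D := (y : D) with hYdef
  -- X * Y = 1
  have hXY : X * Y = 1 := by
    have ha0 : ((a : D)) ≠ 0 := by
      intro h
      apply haq
      have : a = 0 := Subtype.ext h
      rw [this]; exact q.zero_mem
    have hb0 : ((b : D)) ≠ 0 := by
      intro h
      apply hbp
      have : a = a := rfl
      have : b = 0 := Subtype.ext h
      rw [this]; exact p.zero_mem
    have h1 : ((↑bu⁻¹ : B₁) : D) * (b : D) = 1 := by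
      have : (↑bu⁻¹ * ↑bu : B₁) = 1 := bu.inv_mul
      have h2 := congrArg (fun t : B₁ => (t : D)) this
      simpa [hbu] using h2
    have h2 : ((↑au⁻¹ : B₂) : D) * (a : D) = 1 := by
      have : (↑au⁻¹ * ↑au : B₂) = 1 := au.inv_mul
      have h3 := congrArg (fun t : B₂ => (t : D)) this
      simpa [hau] using h3
    have hX : X * (b : D) = (a : D) := by
      rw [hXdef, hxdef]
      push_cast
      rw [mul_assoc, h1, mul_one]; rfl
    have hY : Y * (a : D) = (b : D) := by
      rw [hYdef, hydef]
      push_cast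
      rw [mul_assoc, h2, mul_one]; rfl
    have : (X * Y) * ((a : D) * (b : D)) = (a : D) * (b : D) := by
      calc (X * Y) * ((a : D) * (b : D)) = (X * (b:D)) * (Y * (a:D)) := by ring
        _ = (a : D) * (b : D) := by rw [hX, hY]
    exact mul_right_cancel₀ (mul_ne_zero ha0 hb0) (by simpa using this)
  -- equations in D
  have hC : ((c : D)) ^ 2 = 1 + X ^ 2 := by
    have := congrArg (fun t : B₁ => (t : D)) hc; push_cast at this; exact this
  have hC' : ((c' : D)) ^ 2 = 1 - X ^ 2 := by
    have := congrArg (fun t : B₁ => (t : D)) hc'; push_cast at this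
    rw [this]; ring
  have hD : ((d : D)) ^ 2 = 1 + Y ^ 2 := by
    have := congrArg (fun t : B₂ => (t : D)) hd; push_cast at this; exact this
  have hD' : ((d' : D)) ^ 2 = 1 - Y ^ 2 := by
    have := congrArg (fun t : B₂ => (t : D)) hd'; push_cast at this
    rw [this]; ring
  -- inverses of c and d'
  set Ci : D := ((↑cu⁻¹ : B₁) : D) with hCidef
  set D'i : D := ((↑d'u⁻¹ : B₂) : D) with hD'idef
  have hCi : (c : D) * Ci = 1 := by
    have : (↑cu * ↑cu⁻¹ : B₁) = 1 := cu.mul_inv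
    have h2 := congrArg (fun t : B₁ => (t : D)) this
    simpa [hcu', hCidef] using h2
  have hD'i : (d' : D) * D'i = 1 := by
    have : (↑d'u * ↑d'u⁻¹ : B₂) = 1 := d'u.mul_inv
    have h2 := congrArg (fun t : B₂ => (t : D)) this
    simpa [hd'u', hD'idef] using h2
  -- the square root of -1
  set w : D := (c' : D) * Ci * (d : D) * D'i with hwdef
  have hwsq : w ^ 2 = -1 := by
    have e1 : (1 + X ^ 2) * Ci ^ 2 = 1 := by
      rw [← hC]; rw [← mul_pow, hCi, one_pow]
    have e2 : (1 - Y ^ 2) * D'i ^ 2 = 1 := by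
      rw [← hD']; rw [← mul_pow, hD'i, one_pow]
    have e3 : (1 - X ^ 2) * (1 + Y ^ 2) = -((1 + X ^ 2) * (1 - Y ^ 2)) := by
      linear_combination (-2 * (X * Y + 1)) * hXY
    calc w ^ 2 = ((c' : D) ^ 2 * (d : D) ^ 2) * (Ci ^ 2 * D'i ^ 2) := by rw [hwdef]; ring
      _ = ((1 - X ^ 2) * (1 + Y ^ 2)) * (Ci ^ 2 * D'i ^ 2) := by rw [hC', hD]
      _ = -(((1 + X ^ 2) * Ci ^ 2) * ((1 - Y ^ 2) * D'i ^ 2)) := by rw [e3]; ring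
      _ = -1 := by rw [e1, e2]; norm_num
  have hsq : IsSquare (-1 : D) := ⟨w, by rw [← hwsq]; ring⟩
  have hss : IsSumSq (-1 : D) := isSumSq_of_isSquare hsq
  refine ⟨hsq, hss, ?_⟩
  intro P hP
  unfold FormallyRealField
  rw [not_not]
  have : IsSquare (-1 : IsLocalRing.ResidueField (Localization.AtPrime P)) := by
    have := hsq.map ((IsLocalRing.residue (Localization.AtPrime P)).comp
      (algebraMap D (Localization.AtPrime P)))
    simpa using this
  exact isSumSq_of_isSquare this
end
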